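/- Let 0 < s < π/4 and write ℓ = ℓ(s). Define V : ℝ → ℝ by V(t) = sin(t) for |t| ≤ ℓ and V(t) = sign(t)·(√2/2)·F(|t|,s)·sin(Θ(|t|,s)) for |t| ≥ ℓ. Then V is C¹ on ℝ (in particular the two formulas and their first derivatives agree at |t| = ℓ), V(0) = 0, V'(0) = 1, and V''(t) + K(t)·V(t) = 0 for all t with |t| ≠ ℓ, where K(t) = 1 for |t| < ℓ and K(t) = −1 + 4·sin²(s)·F(|t|,s)^{−4} for |t| > ℓ. -/

import Mathlib

open Real

/-- `ℓ(s) = arccos( (√2/2)/cos s )`. -/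
noncomputable def ell (s : ℝ) : ℝ := Real.arccos ((Real.sqrt 2 / 2) / Real.cos s)

/-- `F(t,s) = cosh(t − ℓ(s)) + √(cos 2s)·sinh(t − ℓ(s))`. -/
noncomputable def Ffun (t s : ℝ) : ℝ :=
  Real.cosh (t - ell s) + Real.sqrt (Real.cos (2 * s)) * Real.sinh (t - ell s)

/-- `Θ(t,s) = 2 sin s · sinh(t − ℓ(s)) / F(t,s) + arccos(tan s)`. -/
noncomputable def Theta (t s : ℝ) : ℝ :=
  2 * Real.sin s * Real.sinh (t - ell s) / Ffun t s + Real.arccos (Real.tan s)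

noncomputable def Fd (t s : ℝ) : ℝ :=
  Real.sinh (t - ell s) + Real.sqrt (Real.cos (2 * s)) * Real.cosh (t - ell s)

noncomputable def gfun (s t : ℝ) : ℝ := Real.sqrt 2 / 2 * Ffun t s * Real.sin (Theta t s)

noncomputable def g1fun (s t : ℝ) : ℝ :=
  Real.sqrt 2 / 2 * (Fd t s * Real.sin (Theta t s)
    + 2 * Real.sin s * Real.cos (Theta t s) / Ffun t s)

noncomputable def Wfun (s t : ℝ) : ℝ := if |t| ≤ ell s then Real.cos t else g1fun s |t|

lemma cos_s_pos {s : ℝ} (hs : 0 < s) (hs' : s < π / 4) : 0 < Real.cos s := by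
  apply Real.cos_pos_of_mem_Ioo
  exact Set.mem_Ioo.2 ⟨by nlinarith [Real.pi_pos], by nlinarith [Real.pi_pos]⟩

lemma cos_s_big {s : ℝ} (hs : 0 < s) (hs' : s < π / 4) : Real.sqrt 2 / 2 < Real.cos s := by
  have h := Real.cos_lt_cos_of_nonneg_of_le_pi (le_of_lt hs)
    (by nlinarith [Real.pi_pos]) hs'
  rwa [Real.cos_pi_div_four] at h

lemma x_lt_one {s : ℝ} (hs : 0 < s) (hs' : s < π / 4) :
    (Real.sqrt 2 / 2) / Real.cos s < 1 := by
  rw [div_lt_one (cos_s_pos hs hs')]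
  exact cos_s_big hs hs'

lemma x_pos {s : ℝ} (hs : 0 < s) (hs' : s < π / 4) :
    0 < (Real.sqrt 2 / 2) / Real.cos s := by
  apply div_pos _ (cos_s_pos hs hs')
  positivity

lemma cos_ell {s : ℝ} (hs : 0 < s) (hs' : s < π / 4) :
    Real.cos (ell s) = (Real.sqrt 2 / 2) / Real.cos s :=
  Real.cos_arccos (by linarith [x_pos hs hs']) (le_of_lt (x_lt_one hs hs'))

lemma ell_pos {s : ℝ} (hs : 0 < s) (hs' : s < π / 4) : 0 < ell s :=
  Real.arccos_pos.2 (x_lt_one hs hs')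

lemma cos2s_pos {s : ℝ} (hs : 0 < s) (hs' : s < π / 4) : 0 < Real.cos (2 * s) := by
  apply Real.cos_pos_of_mem_Ioo
  exact Set.mem_Ioo.2 ⟨by nlinarith [Real.pi_pos], by nlinarith [Real.pi_pos]⟩

lemma sin_s_pos {s : ℝ} (hs : 0 < s) (hs' : s < π / 4) : 0 < Real.sin s := by
  apply Real.sin_pos_of_pos_of_lt_pi hs
  nlinarith [Real.pi_pos]

lemma cos2s_lt_one {s : ℝ} (hs : 0 < s) (hs' : s < π / 4) : Real.cos (2 * s) < 1 := by
  rw [Real.cos_two_mul']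
  nlinarith [Real.sin_sq_add_cos_sq s, sin_s_pos hs hs']

lemma c_le_one {s : ℝ} (hs : 0 < s) (hs' : s < π / 4) :
    Real.sqrt (Real.cos (2 * s)) ≤ 1 := by
  rw [show (1:ℝ) = Real.sqrt 1 by simp]
  exact Real.sqrt_le_sqrt (le_of_lt (cos2s_lt_one hs hs'))

lemma F_pos {s : ℝ} (hs : 0 < s) (hs' : s < π / 4) (t : ℝ) : 0 < Ffun t s := by
  have h1 : 0 < Real.cosh (t - ell s) + Real.sinh (t - ell s) := by
    rw [Real.cosh_add_sinh]; exact Real.exp_pos _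
  have h2 : 0 < Real.cosh (t - ell s) - Real.sinh (t - ell s) := by
    rw [Real.cosh_sub_sinh]; exact Real.exp_pos _
  have hc0 : 0 ≤ Real.sqrt (Real.cos (2 * s)) := Real.sqrt_nonneg _
  have hc1 := c_le_one hs hs'
  have h3 := mul_nonneg (sub_nonneg.2 hc1) (le_of_lt h2)
  have h4 := mul_nonneg hc0 (le_of_lt h1)
  unfold Ffun
  nlinarith

lemma tan_s_pos {s : ℝ} (hs : 0 < s) (hs' : s < π / 4) : 0 < Real.tan s := by
  apply Real.tan_pos_of_pos_of_lt_pi_div_two hs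
  nlinarith [Real.pi_pos]

lemma tan_s_lt_one {s : ℝ} (hs : 0 < s) (hs' : s < π / 4) : Real.tan s < 1 := by
  have h := Real.tan_lt_tan_of_nonneg_of_lt_pi_div_two (le_of_lt hs)
    (by nlinarith [Real.pi_pos] : π/4 < π/2) hs'
  rwa [Real.tan_pi_div_four] at h

lemma F_deriv {s : ℝ} (t : ℝ) : HasDerivAt (fun t => Ffun t s) (Fd t s) t := by
  have h : HasDerivAt (fun u : ℝ => u - ell s) 1 t := (hasDerivAt_id t).sub_const _
  have h2 := h.cosh.add (h.sinh.const_mul (Real.sqrt (Real.cos (2 * s))))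
  simp only [mul_one] at h2
  simpa only [Ffun, Fd, Pi.add_def] using h2

lemma Fd_deriv {s : ℝ} (t : ℝ) : HasDerivAt (fun t => Fd t s) (Ffun t s) t := by
  have h : HasDerivAt (fun u : ℝ => u - ell s) 1 t := (hasDerivAt_id t).sub_const _
  have h2 := h.sinh.add (h.cosh.const_mul (Real.sqrt (Real.cos (2 * s))))
  simp only [mul_one] at h2
  simpa only [Ffun, Fd, Pi.add_def] using h2

lemma Theta_deriv {s : ℝ} (hs : 0 < s) (hs' : s < π / 4) (t : ℝ) :
    HasDerivAt (fun t => Theta t s) (2 * Real.sin s / (Ffun t s) ^ 2) t := by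
  have hFpos := F_pos hs hs' t
  have hFne : Ffun t s ≠ 0 := ne_of_gt hFpos
  have h : HasDerivAt (fun u : ℝ => u - ell s) 1 t := (hasDerivAt_id t).sub_const _
  have hnum : HasDerivAt (fun u : ℝ => 2 * Real.sin s * Real.sinh (u - ell s))
      (2 * Real.sin s * Real.cosh (t - ell s)) t := by
    have := h.sinh.const_mul (2 * Real.sin s)
    simpa using this
  have hdiv := (hnum.div (F_deriv t) hFne).add_const (Real.arccos (Real.tan s))
  have : HasDerivAt (fun u => Theta u s)
      ((2 * Real.sin s * Real.cosh (t - ell s) * Ffun t s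
        - 2 * Real.sin s * Real.sinh (t - ell s) * Fd t s) / Ffun t s ^ 2) t := by
    simpa only [Theta, Pi.div_def] using hdiv
  convert this using 1
  rw [div_eq_div_iff (by positivity) (by positivity)]
  have key := Real.cosh_sq_sub_sinh_sq (t - ell s)
  simp only [Ffun, Fd]
  linear_combination (-2 * Real.sin s * (Real.cosh (t - ell s) + Real.sqrt (Real.cos (2*s)) * Real.sinh (t - ell s))^2) * key

lemma g_deriv {s : ℝ} (hs : 0 < s) (hs' : s < π / 4) (t : ℝ) :
    HasDerivAt (gfun s) (g1fun s t) t := by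
  have hFpos := F_pos hs hs' t
  have hFne : Ffun t s ≠ 0 := ne_of_gt hFpos
  have hΘ := Theta_deriv hs hs' t
  have hkF : HasDerivAt (fun u => Real.sqrt 2 / 2 * Ffun u s)
      (Real.sqrt 2 / 2 * Fd t s) t := (F_deriv t).const_mul _
  have h2 := hkF.mul hΘ.sin
  have h3 : HasDerivAt (gfun s)
      (Real.sqrt 2 / 2 * Fd t s * Real.sin (Theta t s)
        + Real.sqrt 2 / 2 * Ffun t s * (Real.cos (Theta t s) * (2 * Real.sin s / Ffun t s ^ 2))) t := by
    exact h2
  convert h3 using 1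
  simp only [g1fun]
  field_simp

lemma g1_deriv {s : ℝ} (hs : 0 < s) (hs' : s < π / 4) (t : ℝ) :
    HasDerivAt (g1fun s)
      ((1 - 4 * Real.sin s ^ 2 / (Ffun t s) ^ 4) * gfun s t) t := by
  have hFpos := F_pos hs hs' t
  have hFne : Ffun t s ≠ 0 := ne_of_gt hFpos
  have hΘ := Theta_deriv hs hs' t
  have h1 := (Fd_deriv (s := s) t).mul hΘ.sin
  have h2 := (hΘ.cos.const_mul (2 * Real.sin s)).div (F_deriv t) hFne
  have h3 := (h1.add h2).const_mul (Real.sqrt 2 / 2)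
  have h4 : HasDerivAt (g1fun s)
      (Real.sqrt 2 / 2 * ((Ffun t s * Real.sin (Theta t s)
          + Fd t s * (Real.cos (Theta t s) * (2 * Real.sin s / Ffun t s ^ 2)))
        + ((2 * Real.sin s * (-Real.sin (Theta t s) * (2 * Real.sin s / Ffun t s ^ 2))) * Ffun t s
            - 2 * Real.sin s * Real.cos (Theta t s) * Fd t s) / Ffun t s ^ 2)) t := by
    exact h3
  convert h4 using 1
  simp only [gfun]
  field_simp
  ring

lemma F_at_ell {s : ℝ} : Ffun (ell s) s = 1 := by simp [Ffun]

lemma Fd_at_ell {s : ℝ} : Fd (ell s) s = Real.sqrt (Real.cos (2 * s)) := by simp [Fd]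

lemma Theta_at_ell {s : ℝ} : Theta (ell s) s = Real.arccos (Real.tan s) := by
  simp [Theta]

lemma sqrt_half : Real.sqrt (1 / 2) = Real.sqrt 2 / 2 := by
  rw [show (1:ℝ)/2 = (Real.sqrt 2 / 2) ^ 2 by
    rw [div_pow, Real.sq_sqrt (by norm_num : (0:ℝ) ≤ 2)]; norm_num]
  exact Real.sqrt_sq (by positivity)

lemma one_sub_tan_sq {s : ℝ} (hs : 0 < s) (hs' : s < π / 4) :
    1 - Real.tan s ^ 2 = Real.cos (2 * s) / Real.cos s ^ 2 := by
  have hc := cos_s_pos hs hs'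
  rw [Real.tan_eq_sin_div_cos, Real.cos_two_mul']
  field_simp

lemma g_at_ell {s : ℝ} (hs : 0 < s) (hs' : s < π / 4) :
    gfun s (ell s) = Real.sin (ell s) := by
  have hc := cos_s_pos hs hs'
  have htan0 := tan_s_pos hs hs'
  have htan1 := tan_s_lt_one hs hs'
  have h1 : (0:ℝ) ≤ 1 - Real.tan s ^ 2 := by nlinarith
  rw [gfun, F_at_ell, Theta_at_ell, Real.sin_arccos, mul_one]
  have hsin : Real.sin (ell s) = Real.sqrt (1 - ((Real.sqrt 2 / 2) / Real.cos s) ^ 2) := by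
    rw [ell, Real.sin_arccos]
  rw [hsin, ← sqrt_half, ← Real.sqrt_mul (by norm_num : (0:ℝ) ≤ 1/2)]
  congr 1
  rw [one_sub_tan_sq hs hs', Real.cos_two_mul', div_pow,
    Real.sq_sqrt (by norm_num : (0:ℝ) ≤ 1/2)]
  field_simp
  nlinarith [Real.sin_sq_add_cos_sq s]

lemma g1_at_ell {s : ℝ} (hs : 0 < s) (hs' : s < π / 4) :
    g1fun s (ell s) = Real.cos (ell s) := by
  have hc := cos_s_pos hs hs'
  have htan0 := tan_s_pos hs hs'
  have htan1 := tan_s_lt_one hs hs'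
  have h1 : (0:ℝ) ≤ 1 - Real.tan s ^ 2 := by nlinarith
  rw [g1fun, F_at_ell, Fd_at_ell, Theta_at_ell, Real.sin_arccos,
    Real.cos_arccos (by linarith) (le_of_lt htan1), cos_ell hs hs']
  have hsq : Real.sqrt (1 - Real.tan s ^ 2)
      = Real.sqrt (Real.cos (2 * s)) / Real.cos s := by
    rw [one_sub_tan_sq hs hs', Real.sqrt_div (le_of_lt (cos2s_pos hs hs')),
      Real.sqrt_sq (le_of_lt hc)]
  rw [hsq]
  have hcc := Real.mul_self_sqrt (le_of_lt (cos2s_pos hs hs'))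
  have h2 : Real.cos (2 * s) = 1 - 2 * Real.sin s ^ 2 := by
    rw [Real.cos_two_mul']
    nlinarith [Real.sin_sq_add_cos_sq s]
  rw [Real.tan_eq_sin_div_cos]
  field_simp
  nlinarith [hcc]


theorem stmt7 (s : ℝ) (hs : 0 < s) (hs' : s < π / 4)
    (V K : ℝ → ℝ)
    (hV : ∀ t : ℝ, V t = if |t| ≤ ell s then Real.sin t
      else Real.sign t * (Real.sqrt 2 / 2) * Ffun |t| s * Real.sin (Theta |t| s))
    (hK : ∀ t : ℝ, K t = if |t| ≤ ell s then 1
      else -1 + 4 * (Real.sin s) ^ 2 * ((Ffun |t| s)⁻¹) ^ 4) :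
    ContDiff ℝ 1 V ∧ V 0 = 0 ∧ deriv V 0 = 1 ∧
    ∀ t : ℝ, |t| ≠ ell s → HasDerivAt (deriv V) (-(K t * V t)) t := by
  have ha0 : 0 < ell s := ell_pos hs hs'
  have hg := g_deriv hs hs'
  have hVsin : ∀ u : ℝ, |u| ≤ ell s → V u = Real.sin u := fun u hu => by
    rw [hV u, if_pos hu]
  have hVg : ∀ u : ℝ, ell s < u → V u = gfun s u := by
    intro u hu
    have hu0 : 0 < u := lt_trans ha0 hu
    rw [hV u, if_neg (by rw [abs_of_pos hu0]; exact not_le.2 hu), abs_of_pos hu0,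
      Real.sign_of_pos hu0, gfun]
    ring
  have hVg' : ∀ u : ℝ, u < -ell s → V u = -gfun s (-u) := by
    intro u hu
    have hu0 : u < 0 := by linarith
    have habs : |u| = -u := abs_of_neg hu0
    rw [hV u, if_neg (by rw [habs]; push_neg; linarith), habs,
      Real.sign_of_neg hu0, gfun]
    ring
  have hVa : V (ell s) = gfun s (ell s) := by
    rw [hVsin (ell s) (le_of_eq (abs_of_pos ha0)), g_at_ell hs hs']
  have hVna : V (-ell s) = -gfun s (ell s) := by
    rw [hVsin (-ell s) (by rw [abs_neg, abs_of_pos ha0]), Real.sin_neg,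
      g_at_ell hs hs']
  have hgneg : ∀ u : ℝ, HasDerivAt (fun v => -gfun s (-v)) (g1fun s (-u)) u := by
    intro u
    have h1 := ((hg (-u)).comp u (hasDerivAt_neg u)).neg
    exact h1.congr_deriv (by ring)
  have hW : ∀ t : ℝ, HasDerivAt V (Wfun s t) t := by
    intro t
    rcases lt_trichotomy |t| (ell s) with h | h | h
    · have hev : V =ᶠ[nhds t] Real.sin := by
        have hop : IsOpen {u : ℝ | |u| < ell s} :=
          isOpen_lt continuous_abs continuous_const
        filter_upwards [hop.mem_nhds h] with u hu
        exact hVsin u (le_of_lt hu)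
      have hd := (Real.hasDerivAt_sin t).congr_of_eventuallyEq hev
      have hw : Wfun s t = Real.cos t := by rw [Wfun, if_pos h.le]
      rwa [hw]
    · rcases (abs_eq (le_of_lt ha0)).1 h with rfl | rfl
      · have left : HasDerivWithinAt V (Real.cos (ell s)) (Set.Iic (ell s)) (ell s) := by
          apply (Real.hasDerivAt_sin (ell s)).hasDerivWithinAt.congr_of_eventuallyEq
          · filter_upwards [nhdsWithin_le_nhds (Ioi_mem_nhds (by linarith : -ell s < ell s)),
              self_mem_nhdsWithin] with u hu1 hu2
            exact hVsin u (abs_le.2 ⟨le_of_lt hu1, hu2⟩)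
          · exact hVsin _ (le_of_eq (abs_of_pos ha0))
        have right : HasDerivWithinAt V (Real.cos (ell s)) (Set.Ici (ell s)) (ell s) := by
          have hd := (hg (ell s)).hasDerivWithinAt (s := Set.Ici (ell s))
          rw [g1_at_ell hs hs'] at hd
          apply hd.congr_of_eventuallyEq
          · filter_upwards [self_mem_nhdsWithin] with u hu
            have hu' : ell s ≤ u := hu
            rcases eq_or_lt_of_le hu' with heq | hlt
            · rw [← heq]; exact hVa
            · exact hVg u hlt
          · exact hVa
        have hu := left.union right
        rw [Set.Iic_union_Ici] at hu
        have hda := hasDerivWithinAt_univ.1 hu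
        have hw : Wfun s (ell s) = Real.cos (ell s) := by
          rw [Wfun, if_pos (le_of_eq (abs_of_pos ha0))]
        rwa [hw]
      · have right : HasDerivWithinAt V (Real.cos (-ell s)) (Set.Ici (-ell s)) (-ell s) := by
          apply (Real.hasDerivAt_sin (-ell s)).hasDerivWithinAt.congr_of_eventuallyEq
          · filter_upwards [nhdsWithin_le_nhds (Iio_mem_nhds (by linarith : -ell s < ell s)),
              self_mem_nhdsWithin] with u hu1 hu2
            exact hVsin u (abs_le.2 ⟨hu2, le_of_lt hu1⟩)
          · exact hVsin _ (by rw [abs_neg, abs_of_pos ha0])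
        have left : HasDerivWithinAt V (Real.cos (-ell s)) (Set.Iic (-ell s)) (-ell s) := by
          have hd := (hgneg (-ell s)).hasDerivWithinAt (s := Set.Iic (-ell s))
          rw [neg_neg, g1_at_ell hs hs', ← Real.cos_neg] at hd
          apply hd.congr_of_eventuallyEq
          · filter_upwards [self_mem_nhdsWithin] with u hu
            have hu' : u ≤ -ell s := hu
            rcases eq_or_lt_of_le hu' with heq | hlt
            · rw [heq, neg_neg]; exact hVna
            · exact hVg' u hlt
          · rw [neg_neg]; exact hVna
        have hu := left.union right
        rw [Set.Iic_union_Ici] at hu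
        have hda := hasDerivWithinAt_univ.1 hu
        have hw : Wfun s (-ell s) = Real.cos (-ell s) := by
          have hcond : |(-ell s)| ≤ ell s := by rw [abs_neg, abs_of_pos ha0]
          rw [Wfun, if_pos hcond]
        rwa [hw]
    · rcases abs_cases t with ⟨he, hp⟩ | ⟨he, hn⟩
      · have hlt : ell s < t := by rw [he] at h; exact h
        have hev : V =ᶠ[nhds t] gfun s := by
          filter_upwards [Ioi_mem_nhds hlt] with u hu
          exact hVg u hu
        have hd := (hg t).congr_of_eventuallyEq hev
        have hw : Wfun s t = g1fun s t := by
          rw [Wfun, if_neg (not_le.2 h), he]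
        rwa [hw]
      · have hlt : t < -ell s := by rw [he] at h; linarith
        have hev : V =ᶠ[nhds t] (fun v => -gfun s (-v)) := by
          filter_upwards [Iio_mem_nhds hlt] with u hu
          exact hVg' u hu
        have hd := (hgneg t).congr_of_eventuallyEq hev
        have hw : Wfun s t = g1fun s (-t) := by
          rw [Wfun, if_neg (not_le.2 h), he]
        rwa [hw]
  have hderiv : deriv V = Wfun s := funext fun t => (hW t).deriv
  have hWcont : Continuous (Wfun s) := by
    have hdiff : Differentiable ℝ (g1fun s) := fun u => (g1_deriv hs hs' u).differentiableAt
    have hg1cont : Continuous (g1fun s) := hdiff.continuous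
    unfold Wfun
    apply Continuous.if_le Real.continuous_cos (hg1cont.comp continuous_abs)
      continuous_abs continuous_const
    intro x hx
    simp only [Function.comp_apply]
    rw [← Real.cos_abs, hx]
    exact (g1_at_ell hs hs').symm
  refine ⟨contDiff_one_iff_deriv.2 ⟨fun t => (hW t).differentiableAt,
    by rw [hderiv]; exact hWcont⟩, ?_, ?_, ?_⟩
  · rw [hV 0]; simp [le_of_lt ha0]
  · rw [hderiv]; simp [Wfun, le_of_lt ha0]
  · intro t hne
    rw [hderiv]
    rcases lt_trichotomy |t| (ell s) with h | h | h
    · have hev : Wfun s =ᶠ[nhds t] Real.cos := by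
        have hop : IsOpen {u : ℝ | |u| < ell s} :=
          isOpen_lt continuous_abs continuous_const
        filter_upwards [hop.mem_nhds h] with u hu
        rw [Wfun, if_pos (le_of_lt hu)]
      have hd := (Real.hasDerivAt_cos t).congr_of_eventuallyEq hev
      have heq : -(K t * V t) = -Real.sin t := by
        rw [hK t, if_pos h.le, hVsin t h.le]; ring
      rwa [heq]
    · exact absurd h hne
    · rcases abs_cases t with ⟨he, hp⟩ | ⟨he, hn⟩
      · have hlt : ell s < t := by rw [he] at h; exact h
        have hev : Wfun s =ᶠ[nhds t] g1fun s := by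
          filter_upwards [Ioi_mem_nhds hlt] with u hu
          have hu0 : 0 < u := lt_trans ha0 hu
          rw [Wfun, if_neg (by rw [abs_of_pos hu0]; exact not_le.2 hu), abs_of_pos hu0]
        have hd := (g1_deriv hs hs' t).congr_of_eventuallyEq hev
        have hFne : Ffun t s ≠ 0 := ne_of_gt (F_pos hs hs' t)
        have heq : -(K t * V t)
            = (1 - 4 * Real.sin s ^ 2 / (Ffun t s) ^ 4) * gfun s t := by
          rw [hK t, if_neg (not_le.2 h), he, hVg t hlt]
          field_simp
          ring
        rwa [heq]
      · have hlt : t < -ell s := by rw [he] at h; linarith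
        have hev : Wfun s =ᶠ[nhds t] (fun v => g1fun s (-v)) := by
          filter_upwards [Iio_mem_nhds hlt] with u hu
          have hu' : u < -ell s := hu
          have hu0 : u < 0 := by linarith
          have hcond : ¬ |u| ≤ ell s := by rw [abs_of_neg hu0]; push_neg; linarith
          rw [Wfun, if_neg hcond, abs_of_neg hu0]
        have hd0 := (g1_deriv hs hs' (-t)).comp t (hasDerivAt_neg t)
        have hd := hd0.congr_of_eventuallyEq hev
        have hFne : Ffun (-t) s ≠ 0 := ne_of_gt (F_pos hs hs' (-t))
        have heq : -(K t * V t)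
            = (1 - 4 * Real.sin s ^ 2 / (Ffun (-t) s) ^ 4) * gfun s (-t) * (-1) := by
          rw [hK t, if_neg (not_le.2 h), he, hVg' t hlt]
          field_simp
          ring
        rwa [heq]
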